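/- Suppose fluc(t) ≤ γ(t) for all t. Then the cumulated expected losses of the FPL algorithm PROT and of the IFPL algorithm satisfy, for all T: l_{1:T} ≤ r_{1:T} + 2(e^{3/a} − 1) · Σ_{t=1}^T γ(t)^{1−α_t}·Δv_t. -/

import Mathlib

open MeasureTheory ProbabilityTheory Filter Finset

noncomputable section

/-- Cumulative loss `s^i_{1:t}` of expert `i` after step `t`. -/
def cumLoss {N : ℕ} (s : ℕ → Fin N → ℝ) (t : ℕ) (i : Fin N) : ℝ :=
  ∑ j ∈ Finset.Icc 1 t, s j i

/-- Volume of the game: `v_t = v_0 + ∑_{j=1}^t max_i |s^i_j|`. -/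
def vol {N : ℕ} (s : ℕ → Fin N → ℝ) (v0 : ℝ) (t : ℕ) : ℝ :=
  v0 + ∑ j ∈ Finset.Icc 1 t, ⨆ i, |s j i|

/-- `Δv_t = v_t - v_{t-1}`. -/
def dvol {N : ℕ} (s : ℕ → Fin N → ℝ) (v0 : ℝ) (t : ℕ) : ℝ :=
  vol s v0 t - vol s v0 (t - 1)

/-- The scaled fluctuation `fluc(t) = Δv_t / v_t`. -/
def fluc {N : ℕ} (s : ℕ → Fin N → ℝ) (v0 : ℝ) (t : ℕ) : ℝ :=
  dvol s v0 t / vol s v0 t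

/-- The constant `A = 2(e^{3/a} - 1)/(a(1 + ln N))`. -/
def Aconst (N : ℕ) (a : ℝ) : ℝ :=
  2 * (Real.exp (3 / a) - 1) / (a * (1 + Real.log N))

/-- `α_t = (1/2)(1 - ln(A⁻¹)/ln γ(t))`. -/
def alphat (N : ℕ) (a : ℝ) (γ : ℕ → ℝ) (t : ℕ) : ℝ :=
  (1 / 2) * (1 - Real.log (Aconst N a)⁻¹ / Real.log (γ t))

/-- `μ_t = a · γ(t)^{α_t}`. -/
def muPROT (N : ℕ) (a : ℝ) (γ : ℕ → ℝ) (t : ℕ) : ℝ :=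
  a * γ t ^ alphat N a γ t

/-- The learning rate `ε_t = 1/(μ_t v_{t-1})` of the algorithm PROT. -/
def epst {N : ℕ} (s : ℕ → Fin N → ℝ) (v0 a : ℝ) (γ : ℕ → ℝ) (t : ℕ) : ℝ :=
  1 / (muPROT N a γ t * vol s v0 (t - 1))

/-- A run of the FPL algorithm PROT: `P` is a probability measure, `ξ` are i.i.d.
exponentially distributed (rate 1) perturbations, sampled once, and at each step
`t ≥ 1` the algorithm follows the expert `I t ω` minimizing the perturbed
cumulative loss `s^i_{1:t-1} - ξ^i/ε_t`. -/
def ProtRun {N : ℕ} (s : ℕ → Fin N → ℝ) (v0 a : ℝ) (γ : ℕ → ℝ)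
    (Ω : Type) [MeasurableSpace Ω] (P : Measure Ω)
    (ξ : Fin N → Ω → ℝ) (I : ℕ → Ω → Fin N) : Prop :=
  IsProbabilityMeasure P ∧
  (∀ i, Measurable (ξ i)) ∧
  iIndepFun ξ P ∧
  (∀ i, P.map (ξ i) = expMeasure 1) ∧
  (∀ t, Measurable (I t)) ∧
  (∀ t, 1 ≤ t → ∀ (ω : Ω) (i : Fin N),
    cumLoss s (t - 1) (I t ω) - ξ (I t ω) ω / epst s v0 a γ t
      ≤ cumLoss s (t - 1) i - ξ i ω / epst s v0 a γ t)

/-- The learning rate `ε'_t = 1/(μ_t v_t)` of the IFPL algorithm. -/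
def epstIFPL {N : ℕ} (s : ℕ → Fin N → ℝ) (v0 a : ℝ) (γ : ℕ → ℝ) (t : ℕ) : ℝ :=
  1 / (muPROT N a γ t * vol s v0 t)

/-!
After scaling by the learning rate, PROT and IFPL follow at step `t` a leader of
`ε_t s_{1:t-1} - ξ` and of `ε'_t s_{1:t} - ξ`, and these two loss vectors are within
`c = 2 ε'_t Δv_t` of each other in the sup norm. Raising the `i`-th exponential perturbation
by `2c` keeps `i` a leader, so the probability that `i` leads changes at most by the factor
`e^{2c}`; walking between the two loss vectors in small steps, this bounds the total variation
distance of the two leader distributions by `2c` (ties have probability zero, so these are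
probability distributions). Hence `l_t - r_t ≤ 2c Δv_t = 4 fluc(t) Δv_t / μ_t`, which is at most
`(4/a) γ(t)^{1-α_t} Δv_t ≤ 2(e^{3/a} - 1) γ(t)^{1-α_t} Δv_t`.
-/

instance : IsProbabilityMeasure (expMeasure 1) := isProbabilityMeasure_expMeasure one_pos

lemma expMeasure_one_eq_withDensity : expMeasure 1 = volume.withDensity (exponentialPDF 1) := rfl

lemma exponentialPDF_one_sub_le {h : ℝ} (hh : 0 ≤ h) (y : ℝ) :
    exponentialPDF 1 (y - h) ≤ ENNReal.ofReal (Real.exp h) * exponentialPDF 1 y := by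
  rcases lt_or_ge (y - h) 0 with hy | hy
  · simp [exponentialPDF_of_neg hy]
  · rw [exponentialPDF_of_nonneg hy, exponentialPDF_of_nonneg (by linarith),
      ← ENNReal.ofReal_mul (Real.exp_pos h).le, ← mul_assoc, mul_one, ← Real.exp_add]
    exact le_of_eq (by ring_nf)

lemma expMeasure_one_preimage_add_le {h : ℝ} (hh : 0 ≤ h) {T : Set ℝ} (hT : MeasurableSet T) :
    expMeasure 1 ((· + h) ⁻¹' T) ≤ ENNReal.ofReal (Real.exp h) * expMeasure 1 T := by
  have hpdf : Measurable (exponentialPDF 1) := by unfold exponentialPDF; fun_prop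
  rw [expMeasure_one_eq_withDensity, withDensity_apply _ (measurable_add_const h hT),
    withDensity_apply _ hT, ← lintegral_const_mul _ hpdf]
  calc ∫⁻ x in (· + h) ⁻¹' T, exponentialPDF 1 x
      = ∫⁻ y in T, exponentialPDF 1 (y - h) := by
        simpa using (measurePreserving_add_right volume h).setLIntegral_comp_preimage hT
          (hpdf.comp (measurable_sub_const h))
    _ ≤ _ := setLIntegral_mono (by fun_prop) fun y _ => exponentialPDF_one_sub_le hh y

lemma expMeasure_one_singleton (m : ℝ) : expMeasure 1 {m} = 0 :=
  withDensity_absolutelyContinuous _ _ (Real.volume_singleton (a := m))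

abbrev expPi (ι : Type*) [Fintype ι] : Measure (ι → ℝ) := Measure.pi fun _ => expMeasure 1

lemma expPi_eq_lintegral_slice {n : ℕ} (i : Fin (n + 1)) {S : Set (Fin (n + 1) → ℝ)}
    (hS : MeasurableSet S) :
    expPi (Fin (n + 1)) S = ∫⁻ y, expMeasure 1 {x | i.insertNth x y ∈ S} ∂expPi (Fin n) := by
  have he := (measurePreserving_piFinSuccAbove (fun _ : Fin (n + 1) => expMeasure 1) i).symm
  rw [← he.measure_preimage hS.nullMeasurableSet,
    Measure.prod_apply_symm (he.measurable hS)]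
  rfl

lemma Fin.insertNth_add_single {n : ℕ} (i : Fin (n + 1)) (x h : ℝ) (y : Fin n → ℝ) :
    i.insertNth (α := fun _ => ℝ) x y + Pi.single i h = i.insertNth (x + h) y := by
  ext j
  induction j using i.succAboveCases <;> simp

lemma measurable_insertNth_left {n : ℕ} (i : Fin (n + 1)) (y : Fin n → ℝ) :
    Measurable fun x : ℝ => i.insertNth (α := fun _ => ℝ) x y :=
  (MeasurableEquiv.piFinSuccAbove (fun _ => ℝ) i).symm.measurable.comp measurable_prodMk_right

lemma expPi_preimage_add_single_le {n : ℕ} (i : Fin (n + 1)) {h : ℝ} (hh : 0 ≤ h)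
    {T : Set (Fin (n + 1) → ℝ)} (hT : MeasurableSet T) :
    expPi (Fin (n + 1)) ((· + Pi.single i h) ⁻¹' T)
      ≤ ENNReal.ofReal (Real.exp h) * expPi (Fin (n + 1)) T := by
  rw [expPi_eq_lintegral_slice i (measurable_add_const _ hT), expPi_eq_lintegral_slice i hT,
    ← lintegral_const_mul' _ _ ENNReal.ofReal_ne_top]
  refine lintegral_mono fun y => ?_
  simp only [Set.mem_preimage, Fin.insertNth_add_single]
  exact expMeasure_one_preimage_add_le hh (measurable_insertNth_left i y hT)

lemma expPi_setOf_eq_add_eq_zero {n : ℕ} {i j : Fin (n + 1)} (hij : i ≠ j) (c : ℝ) :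
    expPi (Fin (n + 1)) {x | x i = x j + c} = 0 := by
  obtain ⟨j, rfl⟩ := Fin.exists_succAbove_eq hij.symm
  rw [expPi_eq_lintegral_slice i (measurableSet_eq_fun (by fun_prop) (by fun_prop))]
  simp [expMeasure_one_singleton]

def leaderSet {ι : Type*} (φ : ι → ℝ) (i : ι) : Set (ι → ℝ) :=
  {x | ∀ j, φ i - x i ≤ φ j - x j}

section leaderSet

variable {ι : Type*}

lemma measurableSet_leaderSet [Countable ι] (φ : ι → ℝ) (i : ι) :
    MeasurableSet (leaderSet φ i) := by
  simp only [leaderSet, Set.ofPred_forall]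
  exact MeasurableSet.iInter fun j => measurableSet_le (by fun_prop) (by fun_prop)

lemma iUnion_leaderSet [Finite ι] [Nonempty ι] (φ : ι → ℝ) : ⋃ i, leaderSet φ i = Set.univ := by
  refine Set.eq_univ_of_forall fun x => Set.mem_iUnion.2 ?_
  obtain ⟨i, -, hi⟩ := Set.exists_min_image _ (fun j => φ j - x j) Set.finite_univ Set.univ_nonempty
  exact ⟨i, fun j => hi j trivial⟩

lemma leaderSet_inter_subset {φ : ι → ℝ} {i j : ι} :
    leaderSet φ i ∩ leaderSet φ j ⊆ {x | x i = x j + (φ i - φ j)} := by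
  rintro x ⟨hi, hj⟩
  have := hi j
  have := hj i
  simp only [Set.mem_ofPred_eq]
  linarith

lemma leaderSet_subset_preimage_add_single [DecidableEq ι] {φ ψ : ι → ℝ} {c : ℝ}
    (hc : ∀ k, |φ k - ψ k| ≤ c) (i : ι) :
    leaderSet φ i ⊆ (· + Pi.single i (2 * c)) ⁻¹' leaderSet ψ i := by
  intro x hx j
  rcases eq_or_ne j i with rfl | hji
  · exact le_rfl
  have := hx j
  have := abs_le.1 (hc i)
  have := abs_le.1 (hc j)
  simp only [Pi.add_apply, Pi.single_eq_same, Pi.single_eq_of_ne hji, add_zero]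
  linarith

end leaderSet

lemma sum_expPi_leaderSet {n : ℕ} (φ : Fin (n + 1) → ℝ) :
    ∑ i, expPi (Fin (n + 1)) (leaderSet φ i) = 1 := by
  have hdisj : Pairwise (Function.onFun (AEDisjoint (expPi (Fin (n + 1)))) (leaderSet φ)) :=
    fun i j hij => measure_mono_null leaderSet_inter_subset (expPi_setOf_eq_add_eq_zero hij _)
  rw [← tsum_fintype (L := .unconditional _), ← measure_iUnion₀ hdisj
    fun i => (measurableSet_leaderSet φ i).nullMeasurableSet, iUnion_leaderSet, measure_univ]

lemma expPi_leaderSet_le {n : ℕ} {φ ψ : Fin (n + 1) → ℝ} {c : ℝ} (hc : ∀ k, |φ k - ψ k| ≤ c)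
    (i : Fin (n + 1)) :
    expPi (Fin (n + 1)) (leaderSet φ i)
      ≤ ENNReal.ofReal (Real.exp (2 * c)) * expPi (Fin (n + 1)) (leaderSet ψ i) :=
  (measure_mono (leaderSet_subset_preimage_add_single hc i)).trans
    (expPi_preimage_add_single_le i (by linarith [abs_nonneg (φ i - ψ i), hc i])
      (measurableSet_leaderSet ψ i))

lemma abs_sub_le_exp_sub_one_mul {p q a : ℝ} (hp : 0 ≤ p) (hpq : p ≤ Real.exp a * q)
    (hqp : q ≤ Real.exp a * p) : |q - p| ≤ (Real.exp a - 1) * p := by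
  have hexp : Real.exp (-a) * Real.exp a = 1 := by
    rw [← Real.exp_add, neg_add_cancel, Real.exp_zero]
  have hq : Real.exp (-a) * p ≤ q := by
    calc Real.exp (-a) * p ≤ Real.exp (-a) * (Real.exp a * q) := by gcongr
      _ = q := by rw [← mul_assoc, hexp, one_mul]
  -- `1 - e^{-a} ≤ e^a - 1` is AM-GM for `e^a` and `e^{-a}`
  have hcosh : 1 - Real.exp (-a) ≤ Real.exp a - 1 := by
    nlinarith [sq_nonneg (Real.exp a - 1), Real.exp_pos (-a), Real.exp_pos a]
  rw [abs_sub_le_iff]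
  constructor <;> nlinarith

lemma mul_exp_div_sub_one_le {D M : ℝ} (hD : 0 ≤ D) (hDM : D ≤ M) :
    M * (Real.exp (D / M) - 1) ≤ D + D ^ 2 / M := by
  rcases hD.eq_or_lt with rfl | hDpos
  · simp
  have hM : 0 < M := hDpos.trans_le hDM
  have hx : |D / M| ≤ 1 := by
    rw [abs_of_nonneg (by positivity), div_le_one hM]; exact hDM
  have := (abs_le.1 (Real.abs_exp_sub_one_sub_id_le hx)).2
  calc M * (Real.exp (D / M) - 1) ≤ M * (D / M + (D / M) ^ 2) := by gcongr; linarith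
    _ = D + D ^ 2 / M := by field_simp

section LogLipschitz

variable {E ι : Type*} [SeminormedAddCommGroup E] [NormedSpace ℝ E] [Fintype ι]
  {p : E → ι → ℝ} {L : ℝ}

lemma sum_abs_sub_le_mul_exp_sub_one (hp0 : ∀ x i, 0 ≤ p x i) (hp1 : ∀ x, ∑ i, p x i = 1)
    (hratio : ∀ x y i, p x i ≤ Real.exp (L * dist x y) * p y i) (x y : E) {M : ℕ} (hM : 0 < M) :
    ∑ i, |p y i - p x i| ≤ M * (Real.exp (L * dist x y / M) - 1) := by
  set z : ℕ → E := fun k => AffineMap.lineMap x y ((k : ℝ) / M)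
  have hdist : ∀ k, dist (z k) (z (k + 1)) = dist x y / M := by
    intro k
    rw [dist_lineMap_lineMap, Real.dist_eq, abs_sub_comm, Nat.cast_succ, ← sub_div,
      add_sub_cancel_left, abs_of_pos (by positivity)]
    ring
  have hstep : ∀ k, ∑ i, |p (z (k + 1)) i - p (z k) i| ≤ Real.exp (L * dist x y / M) - 1 := by
    intro k
    calc ∑ i, |p (z (k + 1)) i - p (z k) i|
        ≤ ∑ i, (Real.exp (L * dist x y / M) - 1) * p (z k) i := by
          refine Finset.sum_le_sum fun i _ => abs_sub_le_exp_sub_one_mul (hp0 _ i) ?_ ?_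
          · simpa [hdist, mul_div_assoc] using hratio (z k) (z (k + 1)) i
          · simpa [hdist, dist_comm, mul_div_assoc] using hratio (z (k + 1)) (z k) i
      _ = Real.exp (L * dist x y / M) - 1 := by rw [← Finset.mul_sum, hp1, mul_one]
  have hz0 : z 0 = x := by simp only [z, Nat.cast_zero, zero_div, AffineMap.lineMap_apply_zero]
  have hzM : z M = y := by
    simp only [z, div_self ((Nat.cast_ne_zero (R := ℝ)).2 hM.ne'), AffineMap.lineMap_apply_one]
  calc ∑ i, |p y i - p x i|
      = ∑ i, |∑ k ∈ Finset.range M, (p (z (k + 1)) i - p (z k) i)| := by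
        refine Finset.sum_congr rfl fun i _ => ?_
        rw [Finset.sum_range_sub (fun k => p (z k) i), hz0, hzM]
    _ ≤ ∑ i, ∑ k ∈ Finset.range M, |p (z (k + 1)) i - p (z k) i| :=
        Finset.sum_le_sum fun i _ => Finset.abs_sum_le_sum_abs _ _
    _ = ∑ k ∈ Finset.range M, ∑ i, |p (z (k + 1)) i - p (z k) i| := Finset.sum_comm
    _ ≤ ∑ k ∈ Finset.range M, (Real.exp (L * dist x y / M) - 1) :=
        Finset.sum_le_sum fun k _ => hstep k
    _ = M * (Real.exp (L * dist x y / M) - 1) := by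
        rw [Finset.sum_const, Finset.card_range, nsmul_eq_mul]

theorem sum_abs_sub_le_mul_dist (hL : 0 ≤ L) (hp0 : ∀ x i, 0 ≤ p x i)
    (hp1 : ∀ x, ∑ i, p x i = 1) (hratio : ∀ x y i, p x i ≤ Real.exp (L * dist x y) * p y i)
    (x y : E) : ∑ i, |p y i - p x i| ≤ L * dist x y := by
  set D := L * dist x y
  have hD : 0 ≤ D := mul_nonneg hL dist_nonneg
  refine le_of_forall_pos_le_add fun ε hε => ?_
  obtain ⟨M, hM⟩ := exists_nat_gt (D + D ^ 2 / ε)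
  have hDM : D < M := by linarith [show 0 ≤ D ^ 2 / ε by positivity]
  have hM0 : (0 : ℝ) < M := hD.trans_lt hDM
  calc ∑ i, |p y i - p x i| ≤ M * (Real.exp (D / M) - 1) :=
        sum_abs_sub_le_mul_exp_sub_one hp0 hp1 hratio x y (by exact_mod_cast hM0)
    _ ≤ D + D ^ 2 / M := mul_exp_div_sub_one_le hD hDM.le
    _ ≤ D + ε := by
        gcongr
        rw [div_le_iff₀ hM0]
        have := (div_lt_iff₀ hε).1 (show D ^ 2 / ε < M by linarith)
        linarith

end LogLipschitz

def leaderProb {ι : Type*} [Fintype ι] (φ : ι → ℝ) (i : ι) : ℝ :=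
  (expPi ι).real (leaderSet φ i)

section leaderProb

variable {n : ℕ}

lemma sum_leaderProb (φ : Fin (n + 1) → ℝ) : ∑ i, leaderProb φ i = 1 := by
  simp only [leaderProb, measureReal_def]
  rw [← ENNReal.toReal_sum fun i _ => measure_ne_top _ _, sum_expPi_leaderSet, ENNReal.toReal_one]

lemma leaderProb_le_exp_mul (φ ψ : Fin (n + 1) → ℝ) (i : Fin (n + 1)) :
    leaderProb φ i ≤ Real.exp (2 * dist φ ψ) * leaderProb ψ i := by
  have hc : ∀ k, |φ k - ψ k| ≤ dist φ ψ := fun k => by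
    simpa only [Real.dist_eq] using dist_le_pi_dist φ ψ k
  have := ENNReal.toReal_mono (by finiteness) (expPi_leaderSet_le hc i)
  rwa [ENNReal.toReal_mul, ENNReal.toReal_ofReal (Real.exp_nonneg _)] at this

lemma sum_abs_sub_leaderProb_le (φ ψ : Fin (n + 1) → ℝ) :
    ∑ i, |leaderProb ψ i - leaderProb φ i| ≤ 2 * dist φ ψ :=
  sum_abs_sub_le_mul_dist zero_le_two (fun _ _ => measureReal_nonneg) sum_leaderProb
    leaderProb_le_exp_mul φ ψ

end leaderProb

section PerturbedLeader

variable {Ω : Type*} [MeasurableSpace Ω] {P : Measure Ω} [IsProbabilityMeasure P]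

lemma map_eq_expPi_of_iIndepFun {ι : Type*} [Fintype ι] {ξ : ι → Ω → ℝ}
    (hξ : ∀ i, Measurable (ξ i)) (hind : iIndepFun ξ P)
    (hlaw : ∀ i, P.map (ξ i) = expMeasure 1) :
    P.map (fun ω i => ξ i ω) = expPi ι := by
  rw [(iIndepFun_iff_map_fun_eq_pi_map fun i => (hξ i).aemeasurable).1 hind]
  simp only [hlaw]

variable {n : ℕ} {X : Ω → Fin (n + 1) → ℝ} {φ : Fin (n + 1) → ℝ} {G : Ω → Fin (n + 1)}

-- `G` picks one leader in each outcome, so `P(G = i) ≤ leaderProb φ i`; both sides sum to one.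
lemma measureReal_preimage_singleton_eq_leaderProb (hX : Measurable X)
    (hlaw : P.map X = expPi (Fin (n + 1))) (hG : Measurable G)
    (hlead : ∀ ω, X ω ∈ leaderSet φ (G ω)) (i : Fin (n + 1)) :
    P.real (G ⁻¹' {i}) = leaderProb φ i := by
  have hle : ∀ j ∈ Finset.univ, P.real (G ⁻¹' {j}) ≤ leaderProb φ j := by
    intro j _
    rw [leaderProb, ← hlaw, map_measureReal_apply hX (measurableSet_leaderSet φ j)]
    exact measureReal_mono fun ω (hω : G ω = j) => hω ▸ hlead ω
  have hsum : ∑ j, P.real (G ⁻¹' {j}) = ∑ j, leaderProb φ j := by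
    rw [sum_leaderProb, sum_measureReal_preimage_singleton _
      fun j _ => hG (measurableSet_singleton j), Finset.coe_univ, Set.preimage_univ, probReal_univ]
  exact (Finset.sum_eq_sum_iff_of_le hle).1 hsum i (Finset.mem_univ i)

lemma integral_comp_eq_sum_leaderProb (hX : Measurable X) (hlaw : P.map X = expPi (Fin (n + 1)))
    (hG : Measurable G) (hlead : ∀ ω, X ω ∈ leaderSet φ (G ω)) (f : Fin (n + 1) → ℝ) :
    ∫ ω, f (G ω) ∂P = ∑ i, leaderProb φ i * f i := by
  rw [← integral_map hG.aemeasurable (by fun_prop), integral_fintype .of_finite]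
  simp only [map_measureReal_apply hG (measurableSet_singleton _), smul_eq_mul,
    measureReal_preimage_singleton_eq_leaderProb hX hlaw hG hlead]

theorem integral_comp_le_integral_comp_add (hX : Measurable X)
    (hlaw : P.map X = expPi (Fin (n + 1))) (hG : Measurable G)
    (hGlead : ∀ ω, X ω ∈ leaderSet φ (G ω)) {ψ : Fin (n + 1) → ℝ} {H : Ω → Fin (n + 1)}
    (hH : Measurable H) (hHlead : ∀ ω, X ω ∈ leaderSet ψ (H ω)) {f : Fin (n + 1) → ℝ} {Δ : ℝ}
    (hf : ∀ i, |f i| ≤ Δ) :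
    ∫ ω, f (G ω) ∂P ≤ ∫ ω, f (H ω) ∂P + 2 * dist ψ φ * Δ := by
  rw [integral_comp_eq_sum_leaderProb hX hlaw hG hGlead,
    integral_comp_eq_sum_leaderProb hX hlaw hH hHlead, ← sub_le_iff_le_add',
    ← Finset.sum_sub_distrib]
  calc ∑ i, (leaderProb φ i * f i - leaderProb ψ i * f i)
      ≤ ∑ i, |leaderProb φ i - leaderProb ψ i| * Δ := by
        refine Finset.sum_le_sum fun i _ => ?_
        rw [← sub_mul]
        calc (leaderProb φ i - leaderProb ψ i) * f i
            ≤ |leaderProb φ i - leaderProb ψ i| * |f i| := by rw [← abs_mul]; exact le_abs_self _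
          _ ≤ |leaderProb φ i - leaderProb ψ i| * Δ := by gcongr; exact hf i
    _ ≤ 2 * dist ψ φ * Δ := by
        rw [← Finset.sum_mul]
        exact mul_le_mul_of_nonneg_right (sum_abs_sub_leaderProb_le ψ φ)
          ((abs_nonneg _).trans (hf 0))

end PerturbedLeader

lemma mem_leaderSet_smul {ι : Type*} {l x : ι → ℝ} {ε : ℝ} (hε : 0 < ε) {i : ι}
    (h : ∀ j, l i - x i / ε ≤ l j - x j / ε) : x ∈ leaderSet (ε • l) i := by
  intro j
  have := mul_le_mul_of_nonneg_left (h j) hε.le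
  simpa only [Pi.smul_apply, smul_eq_mul, mul_sub, mul_div_cancel₀ _ hε.ne'] using this

lemma abs_one_div_mul_sub_le {μ v v' l d : ℝ} (hμ : 0 < μ) (hv : 0 < v) (hvv' : v ≤ v')
    (hl : |l| ≤ v) (hd : |d| ≤ v' - v) :
    |1 / (μ * v') * (l + d) - 1 / (μ * v) * l| ≤ 2 * (v' - v) / (μ * v') := by
  have hv' : 0 < v' := hv.trans_le hvv'
  have hnum : |v * d - (v' - v) * l| ≤ 2 * v * (v' - v) := by
    calc |v * d - (v' - v) * l| ≤ |v * d| + |(v' - v) * l| := abs_sub _ _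
      _ = v * |d| + (v' - v) * |l| := by
          rw [abs_mul, abs_mul, abs_of_pos hv, abs_of_nonneg (sub_nonneg.2 hvv')]
      _ ≤ v * (v' - v) + (v' - v) * v := by gcongr
      _ = 2 * v * (v' - v) := by ring
  calc |1 / (μ * v') * (l + d) - 1 / (μ * v) * l|
      = |v * d - (v' - v) * l| / (μ * v * v') := by
        rw [show 1 / (μ * v') * (l + d) - 1 / (μ * v) * l = (v * d - (v' - v) * l) / (μ * v * v')
          by field_simp; ring, abs_div, abs_of_pos (by positivity : 0 < μ * v * v')]
    _ ≤ 2 * v * (v' - v) / (μ * v * v') := by gcongr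
    _ = 2 * (v' - v) / (μ * v') := by field_simp

section Game

variable {N : ℕ} (s : ℕ → Fin N → ℝ) (v0 : ℝ)

lemma iSup_abs_nonneg (j : ℕ) : 0 ≤ ⨆ i, |s j i| :=
  Real.iSup_nonneg fun _ => abs_nonneg _

lemma vol_pos (hv0 : 0 < v0) (t : ℕ) : 0 < vol s v0 t :=
  add_pos_of_pos_of_nonneg hv0 (Finset.sum_nonneg fun j _ => iSup_abs_nonneg s j)

lemma cumLoss_eq_add {t : ℕ} (ht : 1 ≤ t) (i : Fin N) :
    cumLoss s t i = cumLoss s (t - 1) i + s t i := by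
  obtain ⟨t, rfl⟩ := Nat.exists_eq_add_of_le' ht
  simp only [cumLoss, Nat.add_sub_cancel, Finset.sum_Icc_succ_top (by omega : 1 ≤ t + 1)]

lemma dvol_eq_iSup {t : ℕ} (ht : 1 ≤ t) : dvol s v0 t = ⨆ i, |s t i| := by
  obtain ⟨t, rfl⟩ := Nat.exists_eq_add_of_le' ht
  simp only [dvol, vol, Nat.add_sub_cancel, Finset.sum_Icc_succ_top (by omega : 1 ≤ t + 1)]
  ring

lemma abs_le_dvol {t : ℕ} (ht : 1 ≤ t) (i : Fin N) : |s t i| ≤ dvol s v0 t :=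
  dvol_eq_iSup s v0 ht ▸ le_ciSup (f := fun i => |s t i|) (Set.finite_range _).bddAbove i

lemma vol_sub_one_le {t : ℕ} (ht : 1 ≤ t) : vol s v0 (t - 1) ≤ vol s v0 t := by
  have := dvol_eq_iSup s v0 ht ▸ iSup_abs_nonneg s t
  rw [dvol] at this
  linarith

lemma abs_cumLoss_le (hv0 : 0 < v0) (t : ℕ) (i : Fin N) : |cumLoss s t i| ≤ vol s v0 t := by
  refine (Finset.abs_sum_le_sum_abs _ _).trans (le_add_of_nonneg_of_le hv0.le ?_)
  exact Finset.sum_le_sum fun j _ =>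
    le_ciSup (f := fun i => |s j i|) (Set.finite_range _).bddAbove i

lemma fluc_div_muPROT_le {a : ℝ} (ha : 0 < a) {γ : ℕ → ℝ} {t : ℕ} (hγ : 0 < γ t)
    (hfluc : fluc s v0 t ≤ γ t) :
    fluc s v0 t / muPROT N a γ t ≤ γ t ^ (1 - alphat N a γ t) / a := by
  have hpow : 0 < γ t ^ alphat N a γ t := Real.rpow_pos_of_pos hγ _
  calc fluc s v0 t / muPROT N a γ t ≤ γ t / muPROT N a γ t := by
        unfold muPROT; gcongr
    _ = γ t ^ (1 - alphat N a γ t) / a := by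
        rw [muPROT, Real.rpow_sub hγ, Real.rpow_one]
        field_simp

end Game

theorem integral_prot_le_integral_ifpl_add {n : ℕ} {s : ℕ → Fin (n + 1) → ℝ} {v0 a : ℝ}
    {γ : ℕ → ℝ} (hv0 : 0 < v0) (ha : 0 < a) {t : ℕ} (ht : 1 ≤ t) (hγ : 0 < γ t)
    (hfluc : fluc s v0 t ≤ γ t) {Ω : Type*} [MeasurableSpace Ω] {P : Measure Ω}
    [IsProbabilityMeasure P] {X : Ω → Fin (n + 1) → ℝ} (hX : Measurable X)
    (hlaw : P.map X = expPi (Fin (n + 1))) {I J : Ω → Fin (n + 1)} (hI : Measurable I)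
    (hJ : Measurable J)
    (hIargmin : ∀ ω i, cumLoss s (t - 1) (I ω) - X ω (I ω) / epst s v0 a γ t
      ≤ cumLoss s (t - 1) i - X ω i / epst s v0 a γ t)
    (hJargmin : ∀ ω i, cumLoss s t (J ω) - X ω (J ω) / epstIFPL s v0 a γ t
      ≤ cumLoss s t i - X ω i / epstIFPL s v0 a γ t) :
    ∫ ω, s t (I ω) ∂P ≤ ∫ ω, s t (J ω) ∂P
      + 2 * (Real.exp (3 / a) - 1) * (γ t ^ (1 - alphat (n + 1) a γ t) * dvol s v0 t) := by
  set μ := muPROT (n + 1) a γ t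
  set Δ := dvol s v0 t
  have hμ : 0 < μ := mul_pos ha (Real.rpow_pos_of_pos hγ _)
  have hv := vol_pos s v0 hv0 (t - 1)
  have hv' := vol_pos s v0 hv0 t
  have hΔ : 0 ≤ Δ := (abs_nonneg _).trans (abs_le_dvol s v0 ht 0)
  have hdist : dist (epstIFPL s v0 a γ t • cumLoss s t) (epst s v0 a γ t • cumLoss s (t - 1))
      ≤ 2 * Δ / (μ * vol s v0 t) := by
    refine (dist_pi_le_iff (by positivity)).2 fun i => ?_
    rw [Real.dist_eq]
    simp only [Pi.smul_apply, smul_eq_mul, epst, epstIFPL, cumLoss_eq_add s ht i]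
    exact abs_one_div_mul_sub_le hμ hv (vol_sub_one_le s v0 ht) (abs_cumLoss_le s v0 hv0 _ i)
      (abs_le_dvol s v0 ht i)
  calc ∫ ω, s t (I ω) ∂P
      ≤ ∫ ω, s t (J ω) ∂P
          + 2 * dist (epstIFPL s v0 a γ t • cumLoss s t) (epst s v0 a γ t • cumLoss s (t - 1))
            * Δ :=
        integral_comp_le_integral_comp_add hX hlaw hI
          (fun ω => mem_leaderSet_smul (by unfold epst; positivity) (hIargmin ω)) hJ
          (fun ω => mem_leaderSet_smul (by unfold epstIFPL; positivity) (hJargmin ω))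
          (abs_le_dvol s v0 ht)
    _ ≤ ∫ ω, s t (J ω) ∂P + 2 * (2 * Δ / (μ * vol s v0 t)) * Δ := by gcongr
    _ = ∫ ω, s t (J ω) ∂P + 4 * (fluc s v0 t / μ) * Δ := by rw [fluc]; ring
    _ ≤ ∫ ω, s t (J ω) ∂P + 4 * (γ t ^ (1 - alphat (n + 1) a γ t) / a) * Δ := by
        gcongr _ + 4 * ?_ * _
        exact fluc_div_muPROT_le s v0 ha hγ hfluc
    _ = ∫ ω, s t (J ω) ∂P + 2 * (2 / a) * (γ t ^ (1 - alphat (n + 1) a γ t) * Δ) := by ring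
    _ ≤ _ := by
        gcongr
        calc 2 / a ≤ 3 / a := by gcongr; norm_num
          _ ≤ Real.exp (3 / a) - 1 := by linarith [Real.add_one_le_exp (3 / a)]

theorem statement4_general {N : ℕ} (s : ℕ → Fin N → ℝ) (v0 : ℝ) (hv0 : 0 < v0)
    (a : ℝ) (ha : 0 < a) (γ : ℕ → ℝ)
    (hγrange : ∀ t, 1 ≤ t → 0 < γ t ∧ γ t < min (Aconst N a) (Aconst N a)⁻¹)
    (hfluc : ∀ t, 1 ≤ t → fluc s v0 t ≤ γ t)
    (Ω : Type) [MeasurableSpace Ω] (P : Measure Ω)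
    (ξ : Fin N → Ω → ℝ) (I : ℕ → Ω → Fin N)
    (hrun : ProtRun s v0 a γ Ω P ξ I)
    (J : ℕ → Ω → Fin N) (hJmeas : ∀ t, Measurable (J t))
    (hJargmin : ∀ t, 1 ≤ t → ∀ (ω : Ω) (i : Fin N),
      cumLoss s t (J t ω) - ξ (J t ω) ω / epstIFPL s v0 a γ t
        ≤ cumLoss s t i - ξ i ω / epstIFPL s v0 a γ t) :
    ∀ T : ℕ, ∑ t ∈ Finset.Icc 1 T, (∫ ω, s t (I t ω) ∂P)
      ≤ (∑ t ∈ Finset.Icc 1 T, (∫ ω, s t (J t ω) ∂P)) +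
        2 * (Real.exp (3 / a) - 1) *
          ∑ t ∈ Finset.Icc 1 T, γ t ^ (1 - alphat N a γ t) * dvol s v0 t := by
  obtain ⟨hP, hξ, hind, hlaw, hI, hIargmin⟩ := hrun
  obtain ⟨ω⟩ := nonempty_of_isProbabilityMeasure P
  obtain ⟨n, rfl⟩ := Nat.exists_eq_add_one_of_ne_zero (I 0 ω).pos.ne'
  intro T
  rw [Finset.mul_sum, ← Finset.sum_add_distrib]
  refine Finset.sum_le_sum fun t ht => ?_
  have ht : 1 ≤ t := (Finset.mem_Icc.1 ht).1
  exact integral_prot_le_integral_ifpl_add hv0 ha ht (hγrange t ht).1 (hfluc t ht)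
    (measurable_pi_lambda _ hξ) (map_eq_expPi_of_iIndepFun hξ hind hlaw) (hI t) (hJmeas t)
    (hIargmin t ht) (hJargmin t ht)

theorem statement4 {N : ℕ} (hN : 2 ≤ N) (s : ℕ → Fin N → ℝ) (v0 : ℝ) (hv0 : 0 < v0)
    (a : ℝ) (ha : 0 < a) (γ : ℕ → ℝ)
    (hγmono : ∀ t, γ (t + 1) ≤ γ t)
    (hγrange : ∀ t, 1 ≤ t → 0 < γ t ∧ γ t < min (Aconst N a) (Aconst N a)⁻¹)
    (hfluc : ∀ t, 1 ≤ t → fluc s v0 t ≤ γ t)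
    (Ω : Type) [MeasurableSpace Ω] (P : Measure Ω)
    (ξ : Fin N → Ω → ℝ) (I : ℕ → Ω → Fin N)
    (hrun : ProtRun s v0 a γ Ω P ξ I)
    (J : ℕ → Ω → Fin N) (hJmeas : ∀ t, Measurable (J t))
    (hJargmin : ∀ t, 1 ≤ t → ∀ (ω : Ω) (i : Fin N),
      cumLoss s t (J t ω) - ξ (J t ω) ω / epstIFPL s v0 a γ t
        ≤ cumLoss s t i - ξ i ω / epstIFPL s v0 a γ t) :
    ∀ T : ℕ, ∑ t ∈ Finset.Icc 1 T, (∫ ω, s t (I t ω) ∂P)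
      ≤ (∑ t ∈ Finset.Icc 1 T, (∫ ω, s t (J t ω) ∂P)) +
        2 * (Real.exp (3 / a) - 1) *
          ∑ t ∈ Finset.Icc 1 T, γ t ^ (1 - alphat N a γ t) * dvol s v0 t :=
  statement4_general s v0 hv0 a ha γ hγrange hfluc Ω P ξ I hrun J hJmeas hJargmin
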